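/- If G_1 and G_2 are graphs with R(K_3, G_1) - |V(G_1)| ≥ R(K_3, G_2), then R(K_3, G_1 ∪ G_2) = R(K_3, G_1), where G_1 ∪ G_2 is the disjoint union. -/

import Mathlib

open SimpleGraph

/-- `H` is contained in `G` as a (not necessarily induced) subgraph. -/
def Contains {α β : Type*} (H : SimpleGraph α) (G : SimpleGraph β) : Prop :=
  ∃ f : α → β, Function.Injective f ∧ ∀ ⦃a b⦄, H.Adj a b → G.Adj (f a) (f b)

/-- Every graph on `r` vertices contains a triangle or contains `H` in its complement. -/
def RamseyProp {β : Type*} (H : SimpleGraph β) (r : ℕ) : Prop :=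
  ∀ F : SimpleGraph (Fin r), ¬ F.CliqueFree 3 ∨ Contains H Fᶜ

/-- `R` is the triangle Ramsey number `R(K_3, H)`. -/
def TriRamsey {β : Type*} (H : SimpleGraph β) (R : ℕ) : Prop :=
  IsLeast {r : ℕ | RamseyProp H r} R

namespace SimpleGraph

variable {α β V W : Type*}

theorem contains_iff_isContained {H : SimpleGraph α} {G : SimpleGraph β} :
    Contains H G ↔ H ⊑ G :=
  ⟨fun ⟨f, hf, hadj⟩ => ⟨⟨⟨f, fun h => hadj h⟩, hf⟩⟩,
    fun ⟨f⟩ => ⟨f, f.injective, fun _ _ => f.toHom.map_adj⟩⟩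

def Copy.complComap (F : SimpleGraph V) (e : W ↪ V) : Copy (F.comap e)ᶜ Fᶜ :=
  ⟨⟨e, fun {_ _} h => ⟨fun hne => h.1 (e.injective hne), h.2⟩⟩, e.injective⟩

def Copy.sumElim {A : SimpleGraph α} {B : SimpleGraph β} {G : SimpleGraph V} (f : Copy A G)
    (g : Copy B G) (h : Disjoint (Set.range f) (Set.range g)) : Copy (A ⊕g B) G where
  toHom.toFun := Sum.elim f g
  toHom.map_rel' {x y} hxy := by
    rcases x with x | x <;> rcases y with y | y
    · exact f.toHom.map_adj hxy
    · exact absurd hxy (not_adj_sum_inl_inr x y)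
    · exact absurd hxy.symm (not_adj_sum_inl_inr y x)
    · exact g.toHom.map_adj hxy
  injective' := by
    rintro (x | x) (y | y) hxy
    · exact congrArg Sum.inl (f.injective hxy)
    · exact (h.ne_of_mem (Set.mem_range_self x) (Set.mem_range_self y) hxy).elim
    · exact (h.ne_of_mem (Set.mem_range_self y) (Set.mem_range_self x) hxy.symm).elim
    · exact congrArg Sum.inr (g.injective hxy)

end SimpleGraph

namespace RamseyProp

variable {α β V : Type*} {H : SimpleGraph β} {r : ℕ}

theorem isContained_compl [Fintype V] (h : RamseyProp H r) {F : SimpleGraph V}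
    (hF : F.CliqueFree 3) (hr : r ≤ Fintype.card V) : H ⊑ Fᶜ := by
  obtain ⟨e⟩ : Nonempty (Fin r ↪ V) :=
    Function.Embedding.nonempty_of_card_le (by simpa using hr)
  have hFe : (F.comap e).CliqueFree 3 := hF.comap (Embedding.comap e F).isContained
  obtain ⟨f⟩ := contains_iff_isContained.1 ((h _).resolve_left (not_not.2 hFe))
  exact ⟨(Copy.complComap F e).comp f⟩

theorem of_isContained {H' : SimpleGraph α} (h : RamseyProp H' r) (hH : H ⊑ H') :
    RamseyProp H r := fun F =>
  (h F).imp_right fun hF => contains_iff_isContained.2 (hH.trans (contains_iff_isContained.1 hF))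

/-- Place `G₁` in `Fᶜ` first; the vertices it misses still induce a triangle-free graph on at
least `r₂` vertices, whose complement therefore contains `G₂`. -/
theorem sum [Fintype α] {G₁ : SimpleGraph α} {G₂ : SimpleGraph β} {r₂ : ℕ}
    (h₁ : RamseyProp G₁ r) (h₂ : RamseyProp G₂ r₂) (hr : r₂ + Fintype.card α ≤ r) :
    RamseyProp (G₁ ⊕g G₂) r := by
  classical
  intro F
  refine or_iff_not_imp_left.2 fun hF => contains_iff_isContained.2 ?_
  obtain ⟨f⟩ := contains_iff_isContained.1 ((h₁ F).resolve_left hF)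
  rw [not_not] at hF
  set s := (Set.range f)ᶜ
  have hcard : r₂ ≤ Fintype.card s := by
    rw [Fintype.card_compl_set, Set.card_range_of_injective (f := f) f.injective, Fintype.card_fin]
    omega
  obtain ⟨g⟩ := h₂.isContained_compl (hF.comap (Copy.induce F s).isContained) hcard
  let g' := (Copy.complComap F (Function.Embedding.subtype (· ∈ s))).comp g
  have hg' : Set.range g' ⊆ s := Set.range_subset_iff.2 fun b => (g b).2
  exact ⟨f.sumElim g' (disjoint_compl_right.mono_right hg')⟩

end RamseyProp

theorem stmt11 {α β : Type*} [Fintype α] (G₁ : SimpleGraph α) (G₂ : SimpleGraph β)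
    (R₁ R₂ : ℕ) (h₁ : TriRamsey G₁ R₁) (h₂ : TriRamsey G₂ R₂)
    (hge : (R₁ : ℤ) - Fintype.card α ≥ R₂) :
    TriRamsey (G₁.sum G₂) R₁ :=
  ⟨h₁.1.sum h₂.1 (by omega),
    fun _ hr => h₁.2 (hr.of_isContained Embedding.sumInl.isContained)⟩
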